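/- arXiv:2501.02104 — 4 statements merged into one kernel-verified Lean document; each statement's English description precedes it below -/
import Mathlib

section
/- If g : ℝ^ℓ → ℝ satisfies Σ_i μ_i g(v_i) = 0 whenever μ ∈ Δ_n and Σ_i μ_i v_i = 0, then g is positively and negatively homogeneous: g(c·v) = c·g(v) for every scalar c ∈ ℝ and vector v. -/
open scoped RealInnerProductSpace BigOperators

theorem stmt_7 {l : ℕ} (g : EuclideanSpace ℝ (Fin l) → ℝ)
    (hg : ∀ (n : ℕ) (μ : Fin n → ℝ) (v : Fin n → EuclideanSpace ℝ (Fin l)),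
      (∀ i, 0 ≤ μ i) → ∑ i, μ i = 1 → ∑ i, μ i • v i = 0 →
        ∑ i, μ i * g (v i) = 0) :
    ∀ (c : ℝ) (v : EuclideanSpace ℝ (Fin l)), g (c • v) = c * g v := by
  have h2 : ∀ (a b : ℝ) (w u : EuclideanSpace ℝ (Fin l)), 0 ≤ a → 0 ≤ b →
      a + b = 1 → a • w + b • u = 0 → a * g w + b * g u = 0 := by
    intro a b w u ha hb hab hsum
    have := hg 2 ![a, b] ![w, u]
      (by intro i; fin_cases i <;> simpa)
      (by simpa [Fin.sum_univ_two] using hab)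
      (by simpa [Fin.sum_univ_two] using hsum)
    simpa [Fin.sum_univ_two] using this
  have hneg : ∀ (t : ℝ), 0 ≤ t → ∀ v : EuclideanSpace ℝ (Fin l),
      g ((-t) • v) = -t * g v := by
    intro t ht v
    have h1t : (0:ℝ) < 1 + t := by linarith
    have key := h2 (1/(1+t)) (t/(1+t)) ((-t) • v) v
      (by positivity) (by positivity)
      (by field_simp)
      (by
        rw [smul_smul, ← add_smul]
        have : 1/(1+t) * (-t) + t/(1+t) = 0 := by field_simp; ring
        rw [this, zero_smul])
    have hne : (1/(1+t) : ℝ) ≠ 0 := by positivity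
    field_simp at key
    rw [neg_smul] at key ⊢
    linarith
  intro c v
  rcases le_or_gt c 0 with hc | hc
  · have := hneg (-c) (by linarith) v
    simpa using this
  · have h1 := hneg c (le_of_lt hc) v
    have h2' := hneg 1 (by norm_num) (c • v)
    have heq : (-1 : ℝ) • (c • v) = (-c) • v := by
      rw [smul_smul]; ring_nf
    rw [heq, h1] at h2'
    linarith
end

section
/- If g : ℝ^ℓ → ℝ satisfies Σ_i μ_i g(v_i) = 0 whenever μ ∈ Δ_n and Σ_i μ_i v_i = 0 (for all n), then g is linear: g(Σ_i γ_i v_i) = Σ_i γ_i g(v_i) for all real coefficients γ_i and vectors v_i. -/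
open scoped RealInnerProductSpace BigOperators

theorem stmt_8 {l : ℕ} (g : EuclideanSpace ℝ (Fin l) → ℝ)
    (hg : ∀ (n : ℕ) (μ : Fin n → ℝ) (v : Fin n → EuclideanSpace ℝ (Fin l)),
      (∀ i, 0 ≤ μ i) → ∑ i, μ i = 1 → ∑ i, μ i • v i = 0 →
        ∑ i, μ i * g (v i) = 0) :
    ∀ (k : ℕ) (γ : Fin k → ℝ) (v : Fin k → EuclideanSpace ℝ (Fin l)),
      g (∑ i, γ i • v i) = ∑ i, γ i * g (v i) := by
  have g0 : g 0 = 0 := by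
    have := hg 1 (fun _ => 1) (fun _ => 0) (fun i => zero_le_one)
      (by simp) (by simp)
    simpa using this
  have two : ∀ (a b : ℝ) (u w : EuclideanSpace ℝ (Fin l)), 0 ≤ a → 0 ≤ b →
      a + b = 1 → a • u + b • w = 0 → a * g u + b * g w = 0 := by
    intro a b u w ha hb hab h
    have := hg 2 ![a, b] ![u, w]
      (by intro i; fin_cases i <;> simpa)
      (by simpa [Fin.sum_univ_two])
      (by simpa [Fin.sum_univ_two])
    simpa [Fin.sum_univ_two] using this
  have hodd : ∀ v : EuclideanSpace ℝ (Fin l), g (-v) = -g v := by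
    intro v
    have := two (1/2) (1/2) v (-v) (by norm_num) (by norm_num) (by norm_num)
      (by simp [smul_neg])
    linarith
  have hsmul : ∀ (t : ℝ) (v : EuclideanSpace ℝ (Fin l)), g (t • v) = t * g v := by
    have hpos : ∀ (s : ℝ) (v : EuclideanSpace ℝ (Fin l)), 0 ≤ s →
        g (s • v) = s * g v := by
      intro s v hs
      have h1s : (0:ℝ) < 1 + s := by linarith
      have := two (1/(1+s)) (s/(1+s)) (s • v) (-v)
        (by positivity) (by positivity)
        (by field_simp)
        (by rw [smul_smul, smul_neg]; ring_nf; rw [mul_comm]; module)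
      rw [hodd] at this
      have key : g (s • v) - s * g v =
          (1+s) * ((1/(1+s)) * g (s • v) + (s/(1+s)) * (-g v)) := by
        field_simp; ring
      rw [this, mul_zero] at key
      linarith
    intro t v
    rcases le_or_gt 0 t with ht | ht
    · exact hpos t v ht
    · have : g (t • v) = g (-((-t) • v)) := by rw [neg_smul, neg_neg]
      rw [this, hodd, hpos (-t) v (by linarith)]
      ring
  have hadd : ∀ u w : EuclideanSpace ℝ (Fin l), g (u + w) = g u + g w := by
    intro u w
    have := hg 3 ![1/2, 1/4, 1/4] ![u + w, (-2 : ℝ) • u, (-2 : ℝ) • w]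
      (by intro i; fin_cases i <;> norm_num)
      (by norm_num [Fin.sum_univ_three, Matrix.cons_val_two, Matrix.tail_cons, Matrix.head_cons])
      (by
        simp only [Fin.sum_univ_three, Matrix.cons_val_zero, Matrix.cons_val_one,
          Matrix.head_cons, Matrix.cons_val_two, Matrix.tail_cons]
        module)
    simp only [Fin.sum_univ_three, Matrix.cons_val_zero, Matrix.cons_val_one,
      Matrix.head_cons, Matrix.cons_val_two, Matrix.tail_cons] at this
    rw [hsmul, hsmul] at this
    linarith
  intro k
  induction k with
  | zero => intro γ v; simpa using g0
  | succ n ih =>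
    intro γ v
    rw [Fin.sum_univ_succ, Fin.sum_univ_succ, hadd, hsmul, ih]
end

section
/- Suppose (φ, d) satisfies information equivalence on ℝ^ℓ. Then for each fixed y, the function x ↦ d(x,y) - φ(x) + φ(y) is affine in x: there exist h₁(y) ∈ ℝ^ℓ and h₂(y) ∈ ℝ such that d(x,y) = φ(x) - φ(y) + ⟨h₁(y), x⟩ + h₂(y) for all x. -/
open scoped RealInnerProductSpace BigOperators

theorem stmt_10 {l : ℕ} (φ : EuclideanSpace ℝ (Fin l) → ℝ)
    (hconv : StrictConvexOn ℝ Set.univ φ)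
    (d : EuclideanSpace ℝ (Fin l) → EuclideanSpace ℝ (Fin l) → ℝ)
    (heq : ∀ (n : ℕ) (μ : Fin n → ℝ) (x : Fin n → EuclideanSpace ℝ (Fin l)),
      (∀ i, 0 ≤ μ i) → ∑ i, μ i = 1 →
        ∑ i, μ i * φ (x i) - φ (∑ i, μ i • x i) =
          ∑ i, μ i * d (x i) (∑ j, μ j • x j)) :
    ∀ y : EuclideanSpace ℝ (Fin l),
      ∃ (h₁ : EuclideanSpace ℝ (Fin l)) (h₂ : ℝ),
        ∀ x, d x y = φ x - φ y + ⟪h₁, x⟫ + h₂ := by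
  intro y
  set g : EuclideanSpace ℝ (Fin l) → ℝ := fun x => d x y - φ x + φ y with hg
  clear_value g
  -- key: three-point relation
  have key : ∀ (a b c : ℝ) (u v w : EuclideanSpace ℝ (Fin l)),
      0 ≤ a → 0 ≤ b → 0 ≤ c → a + b + c = 1 →
      a • u + b • v + c • w = y → a * g u + b * g v + c * g w = 0 := by
    intro a b c u v w ha hb hc habc hcent
    have h := heq 3 ![a, b, c] ![u, v, w]
      (by intro i; fin_cases i <;> simpa)
      (by simp [Fin.sum_univ_three]; linarith)
    simp only [Fin.sum_univ_three, Matrix.cons_val_zero, Matrix.cons_val_one,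
      Matrix.head_cons, Matrix.cons_val_two, Matrix.tail_cons] at h
    rw [hcent] at h
    simp only [hg]
    linear_combination -h + φ y * habc
  -- reflection
  have hrefl : ∀ u : EuclideanSpace ℝ (Fin l), g ((2 : ℝ) • y - u) = - g u := by
    intro u
    have h := key (1/2) (1/2) 0 u ((2 : ℝ) • y - u) y (by norm_num) (by norm_num)
      (by norm_num) (by norm_num) (by module)
    linear_combination 2 * h
  -- affine property
  have haff : ∀ t : ℝ, 0 ≤ t → t ≤ 1 → ∀ u v : EuclideanSpace ℝ (Fin l),
      g (t • u + (1 - t) • v) = t * g u + (1 - t) * g v := by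
    intro t ht ht1 u v
    set w : EuclideanSpace ℝ (Fin l) := (2 : ℝ) • y - (t • u + (1 - t) • v) with hw
    have h := key (t/2) ((1-t)/2) (1/2) u v w (by linarith) (by linarith)
      (by norm_num) (by ring) (by rw [hw]; module)
    clear_value w
    have hX := hrefl (t • u + (1 - t) • v)
    rw [← hw] at hX
    rw [hX] at h
    linear_combination -2 * h
  set h : EuclideanSpace ℝ (Fin l) → ℝ := fun x => g x - g 0 with hh
  clear_value h
  have h0 : h 0 = 0 := by simp [hh]
  have hsmul01 : ∀ t : ℝ, 0 ≤ t → t ≤ 1 → ∀ u, h (t • u) = t * h u := by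
    intro t ht ht1 u
    have := haff t ht ht1 u 0
    simp only [smul_zero, add_zero] at this
    simp only [hh, this]; ring
  have hadd : ∀ u v, h (u + v) = h u + h v := by
    intro u v
    have h1 := haff (1/2) (by norm_num) (by norm_num) u v
    have h2 := hsmul01 (1/2) (by norm_num) (by norm_num) (u + v)
    have e : ((1:ℝ)/2) • (u + v) = ((1:ℝ)/2) • u + ((1:ℝ) - 1/2) • v := by module
    simp only [hh, e, h1] at h2 ⊢
    linear_combination -2 * h2
  have hneg : ∀ u, h (-u) = - h u := by
    intro u
    have := hadd u (-u)
    simp only [add_neg_cancel, h0] at this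
    linarith
  have hsmulpos : ∀ (t : ℝ), 0 ≤ t → ∀ u, h (t • u) = t * h u := by
    intro t ht u
    rcases le_or_gt t 1 with ht1 | ht1
    · exact hsmul01 t ht ht1 u
    · have hpos : (0:ℝ) < t := lt_of_lt_of_le one_pos ht1.le
      have := hsmul01 (1/t) (by positivity) (by rw [div_le_one hpos]; linarith) (t • u)
      rw [smul_smul, one_div_mul_cancel hpos.ne', one_smul] at this
      field_simp at this
      linarith
  have hsmul : ∀ (t : ℝ) (u : EuclideanSpace ℝ (Fin l)), h (t • u) = t * h u := by
    intro t u
    rcases le_or_gt 0 t with ht | ht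
    · exact hsmulpos t ht u
    · have e : h (t • u) = h ((-t) • (-u)) := by congr 1; module
      rw [e, hsmulpos (-t) (by linarith) (-u), hneg]
      ring
  set f : EuclideanSpace ℝ (Fin l) →ₗ[ℝ] ℝ :=
    IsLinearMap.mk' h ⟨hadd, fun c x => hsmul c x⟩ with hf
  set f' : EuclideanSpace ℝ (Fin l) →L[ℝ] ℝ := LinearMap.toContinuousLinearMap f with hf'
  refine ⟨(InnerProductSpace.toDual ℝ _).symm f', g 0, fun x => ?_⟩
  have hip : ⟪(InnerProductSpace.toDual ℝ (EuclideanSpace ℝ (Fin l))).symm f', x⟫ = f' x :=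
    InnerProductSpace.toDual_symm_apply
  have hfx' : f' x = h x := rfl
  rw [hip, hfx']
  simp only [hh, hg]
  ring
end

section
/- If d : ℝ^ℓ × ℝ^ℓ → ℝ is a divergence (d ≥ 0 with equality iff the arguments are equal), φ : ℝ^ℓ → ℝ is strictly convex and differentiable, and the pair (φ, d) satisfies information equivalence, then d is the Bregman divergence induced by φ: d(x,y) = φ(x) - φ(y) - ⟨∇φ(y), x - y⟩ for all x, y. -/
/-!
Fix `y` and put `h v = φ (y + v) - φ y - d (y + v) y`. Applying information equivalence to the
points `y + vᵢ` with barycenter `y` shows that `∑ μᵢ h vᵢ = 0` whenever `∑ μᵢ vᵢ = 0`; two- and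
three-point instances of this make `h` odd, positively homogeneous and additive, hence linear.
Since `d ≥ 0`, the linear map `h` lies below the increment `v ↦ φ (y + v) - φ y`, and a linear
minorant of the increment of a differentiable function is its derivative, so
`h v = ⟪∇φ y, v⟫`. Evaluating at `v = x - y` gives the Bregman formula.
-/

open scoped RealInnerProductSpace BigOperators

section ZeroMean

variable {E : Type*} [AddCommGroup E] [Module ℝ E]

def PreservesZeroMean (g : E → ℝ) : Prop :=
  ∀ (n : ℕ) (μ : Fin n → ℝ) (v : Fin n → E), (∀ i, 0 ≤ μ i) → ∑ i, μ i = 1 →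
    ∑ i, μ i • v i = 0 → ∑ i, μ i * g (v i) = 0

namespace PreservesZeroMean

variable {g : E → ℝ}

theorem pair (hg : PreservesZeroMean g) {s t : ℝ} (hs : 0 ≤ s) (ht : 0 ≤ t) (hst : s + t = 1)
    {a b : E} (hab : s • a + t • b = 0) : s * g a + t * g b = 0 := by
  simpa using hg 2 ![s, t] ![a, b] (by simp [Fin.forall_fin_two, hs, ht]) (by simpa using hst)
    (by simpa using hab)

theorem triple (hg : PreservesZeroMean g) {a b c : E} (habc : a + b + c = 0) :
    g a + g b + g c = 0 := by
  have h := hg 3 ![1 / 3, 1 / 3, 1 / 3] ![a, b, c] (by simp [Fin.forall_fin_succ])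
    (by simp [Fin.sum_univ_three]; norm_num)
    (by simp only [Fin.sum_univ_three]; simp [← smul_add, habc])
  simp only [Fin.sum_univ_three, Matrix.cons_val_zero, Matrix.cons_val_one, Matrix.cons_val] at h
  linear_combination 3 * h

theorem map_neg (hg : PreservesZeroMean g) (v : E) : g (-v) = -g v := by
  have h := hg.pair (s := 1 / 2) (t := 1 / 2) (by norm_num) (by norm_num) (by norm_num)
    (a := v) (b := -v) (by module)
  linear_combination 2 * h

theorem map_add (hg : PreservesZeroMean g) (a b : E) : g (a + b) = g a + g b := by
  have h := hg.triple (a := a) (b := b) (c := -(a + b)) (by abel)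
  rw [hg.map_neg] at h
  linarith

theorem map_smul_of_nonneg (hg : PreservesZeroMean g) {c : ℝ} (hc : 0 ≤ c) (u : E) :
    g (c • u) = c * g u := by
  have hc₁ : 0 < 1 + c := by linarith
  have h := hg.pair (s := 1 / (1 + c)) (t := c / (1 + c)) (by positivity) (by positivity)
    (by field_simp) (a := c • u) (b := -u) (by rw [smul_smul]; field_simp; simp)
  rw [hg.map_neg] at h
  field_simp at h
  linarith

theorem map_smul (hg : PreservesZeroMean g) (c : ℝ) (u : E) : g (c • u) = c * g u := by
  rcases le_or_gt 0 c with hc | hc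
  · exact hg.map_smul_of_nonneg hc u
  · rw [← neg_neg c, neg_smul, hg.map_neg, hg.map_smul_of_nonneg (by linarith)]
    ring

theorem isLinearMap (hg : PreservesZeroMean g) : IsLinearMap ℝ g :=
  ⟨hg.map_add, hg.map_smul⟩

end PreservesZeroMean

def InformationEquivalent (φ : E → ℝ) (d : E → E → ℝ) : Prop :=
  ∀ (n : ℕ) (μ : Fin n → ℝ) (x : Fin n → E), (∀ i, 0 ≤ μ i) → ∑ i, μ i = 1 →
    ∑ i, μ i * φ (x i) - φ (∑ i, μ i • x i) = ∑ i, μ i * d (x i) (∑ j, μ j • x j)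

theorem InformationEquivalent.preservesZeroMean {φ : E → ℝ} {d : E → E → ℝ}
    (h : InformationEquivalent φ d) (y : E) :
    PreservesZeroMean fun v ↦ φ (y + v) - φ y - d (y + v) y := by
  intro n μ v hμ hμ₁ hv
  have hbar : ∑ i, μ i • (y + v i) = y := by
    simp [smul_add, Finset.sum_add_distrib, ← Finset.sum_smul, hμ₁, hv]
  have hy := h n μ (fun i ↦ y + v i) hμ hμ₁
  rw [hbar] at hy
  simp only [mul_sub, Finset.sum_sub_distrib, ← Finset.sum_mul, hμ₁, one_mul]
  linarith

end ZeroMean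

theorem HasGradientAt.eq_inner_of_forall_le_sub {F : Type*} [NormedAddCommGroup F]
    [InnerProductSpace ℝ F] [CompleteSpace F] {φ : F → ℝ} {g y : F} (hφ : HasGradientAt φ g y)
    (L : F →ₗ[ℝ] ℝ) (hL : ∀ v, L v ≤ φ (y + v) - φ y) (v : F) : L v = ⟪g, v⟫ := by
  set f : ℝ → ℝ := fun t ↦ φ (y + t • v) - t * L v
  have hmin : IsLocalMin f 0 := Filter.Eventually.of_forall fun t ↦ by
    have := hL (t • v)
    simp only [map_smul, smul_eq_mul] at this
    simp only [f, zero_smul, add_zero, zero_mul, sub_zero]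
    linarith
  have hline : HasDerivAt (fun t : ℝ ↦ y + t • v) v 0 := by
    simpa using ((hasDerivAt_id (0 : ℝ)).smul_const v).const_add y
  have hf : HasDerivAt f (⟪g, v⟫ - L v) 0 := by
    have hφ' : HasFDerivAt φ (InnerProductSpace.toDual ℝ F g) (y + (0 : ℝ) • v) := by
      simpa using hasGradientAt_iff_hasFDerivAt.mp hφ
    refine ((hφ'.comp_hasDerivAt 0 hline).sub ((hasDerivAt_id 0).mul_const (L v))).congr_deriv ?_
    simp
  linarith [hmin.hasDerivAt_eq_zero hf]

theorem stmt_11_general {l : ℕ} (φ : EuclideanSpace ℝ (Fin l) → ℝ)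
    (φ' : EuclideanSpace ℝ (Fin l) → EuclideanSpace ℝ (Fin l))
    (hgrad : ∀ x, HasGradientAt φ (φ' x) x)
    (d : EuclideanSpace ℝ (Fin l) → EuclideanSpace ℝ (Fin l) → ℝ)
    (hnonneg : ∀ x y, 0 ≤ d x y)
    (heq : ∀ (n : ℕ) (μ : Fin n → ℝ) (x : Fin n → EuclideanSpace ℝ (Fin l)),
      (∀ i, 0 ≤ μ i) → ∑ i, μ i = 1 →
        ∑ i, μ i * φ (x i) - φ (∑ i, μ i • x i) =
          ∑ i, μ i * d (x i) (∑ j, μ j • x j)) :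
    ∀ x y, d x y = φ x - φ y - ⟪φ' y, x - y⟫ := by
  intro x y
  let L := IsLinearMap.mk' _ (InformationEquivalent.preservesZeroMean heq y).isLinearMap
  have hL : L (x - y) = ⟪φ' y, x - y⟫ :=
    (hgrad y).eq_inner_of_forall_le_sub L (fun v ↦ by simp [L, hnonneg]) _
  simp only [L, IsLinearMap.mk'_apply, add_sub_cancel] at hL
  linarith

theorem stmt_11 {l : ℕ} (φ : EuclideanSpace ℝ (Fin l) → ℝ)
    (φ' : EuclideanSpace ℝ (Fin l) → EuclideanSpace ℝ (Fin l))
    (hconv : StrictConvexOn ℝ Set.univ φ)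
    (hgrad : ∀ x, HasGradientAt φ (φ' x) x)
    (d : EuclideanSpace ℝ (Fin l) → EuclideanSpace ℝ (Fin l) → ℝ)
    (hnonneg : ∀ x y, 0 ≤ d x y)
    (hdef : ∀ x y, d x y = 0 ↔ x = y)
    (heq : ∀ (n : ℕ) (μ : Fin n → ℝ) (x : Fin n → EuclideanSpace ℝ (Fin l)),
      (∀ i, 0 ≤ μ i) → ∑ i, μ i = 1 →
        ∑ i, μ i * φ (x i) - φ (∑ i, μ i • x i) =
          ∑ i, μ i * d (x i) (∑ j, μ j • x j)) :
    ∀ x y, d x y = φ x - φ y - ⟪φ' y, x - y⟫ :=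
  stmt_11_general φ φ' hgrad d hnonneg heq
end
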